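/- arXiv:1409.3442 — 3 statements merged into one kernel-verified Lean document; each statement's English description precedes it below -/
import Mathlib

section
/- Let a(k) be defined by a(0)=0, a(1)=1, a(k+1) = ℓ·a(k) − a(k−1) with ℓ ≥ 2. Then for all j ≥ k ≥ 0, the 'Euler pairing' identity χ(F_j, F_k) = −a(j−k−1) holds, where χ(F_j,F_k) is defined via the bilinear form B((a,b),(c,d)) = a·c + b·d − ℓ·b·c applied to the dimension vectors: B((a(j−1),a(j)), (a(k−1),a(k))) = −a(j−k−1) for j ≥ k+1. -/
/-- Euler-pairing identity χ(F_j, F_k) = −a(j−k−1): the Euler form of the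
ℓ-Kronecker quiver evaluated on the dimension vectors (a(j−1), a(j)) and
(a(k−1), a(k)) equals −a(j−k−1) for j ≥ k+1 ≥ 2, where a(0)=0, a(1)=1,
a(k+1)=ℓa(k)−a(k−1), ℓ ≥ 2. -/
theorem stmt_9 (ℓ : ℤ) (hℓ : 2 ≤ ℓ) (a : ℕ → ℤ)
    (h0 : a 0 = 0) (h1 : a 1 = 1)
    (hrec : ∀ k : ℕ, a (k + 2) = ℓ * a (k + 1) - a k) :
    ∀ j k : ℕ, 1 ≤ k → k + 1 ≤ j →
      a (j - 1) * a (k - 1) + a j * a k - ℓ * a (j - 1) * a k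
        = -a (j - k - 1) := by
  have key : ∀ d m : ℕ, a (m + d + 1) * a m - a (m + d) * a (m + 1) = -a d := by
    intro d m
    induction m with
    | zero =>
      simp only [Nat.zero_add, h0, h1]
      ring
    | succ m ih =>
      have e1 : m + 1 + d + 1 = (m + d) + 2 := by omega
      have e2 : m + 1 + d = m + d + 1 := by omega
      rw [e1, e2, hrec (m + d), hrec m]
      linear_combination ih
  intro j k hk hj
  obtain ⟨m, rfl⟩ : ∃ m, k = m + 1 := ⟨k - 1, by omega⟩
  obtain ⟨d, rfl⟩ : ∃ d, j = m + 1 + d + 1 := ⟨j - m - 2, by omega⟩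
  have e1 : m + 1 + d + 1 - 1 = m + d + 1 := by omega
  have e2 : m + 1 - 1 = m := by omega
  have e3 : m + 1 + d + 1 - (m + 1) - 1 = d := by omega
  have e4 : m + 1 + d + 1 = (m + d) + 2 := by omega
  rw [e1, e2, e3, e4, hrec (m + d)]
  linear_combination key d m
end

section
/- Let a(k) be defined by a(0)=0, a(1)=1, a(k+1) = ℓ·a(k) − a(k−1) with ℓ ≥ 2 an integer. Then for all j ≥ k+1 ≥ 1, the identity a(j−1)·a(k−1) + a(j)·a(k) − ℓ·a(j−1)·a(k) = a(j−k+1) holds (Euler pairing χ(F_k,F_j) = a(j−k+1)). -/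
/-- Euler-pairing identity χ(F_k, F_j) = a(j−k+1): the Euler form of the
ℓ-Kronecker quiver evaluated on the dimension vectors (a(k−1), a(k)) and
(a(j−1), a(j)) equals a(j−k+1) for all j ≥ k+1 ≥ 1, where a(0)=0, a(1)=1,
a(k+1)=ℓa(k)−a(k−1), ℓ ≥ 2. -/
theorem stmt_10 (ℓ : ℤ) (hℓ : 2 ≤ ℓ) (a : ℕ → ℤ)
    (h0 : a 0 = 0) (h1 : a 1 = 1)
    (hrec : ∀ k : ℕ, a (k + 2) = ℓ * a (k + 1) - a k) :
    ∀ j k : ℕ, 1 ≤ k → k + 1 ≤ j →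
      a (j - 1) * a (k - 1) + a j * a k - ℓ * a (k - 1) * a j
        = a (j - k + 1) := by
  have aux : ∀ k j : ℕ, a (j + k) * a (k + 1) - a (j + k + 1) * a k = a j := by
    intro k
    induction k with
    | zero => intro j; simp [h0, h1]
    | succ n ih =>
      intro j
      have h1' := hrec n
      have h2' := hrec (j + n)
      have := ih j
      show a (j + n + 1) * a (n + 2) - a (j + n + 2) * a (n + 1) = a j
      rw [h1', h2']
      linear_combination this
  intro j k hk hj
  obtain ⟨k', rfl⟩ := Nat.exists_eq_add_of_le hk
  obtain ⟨j', rfl⟩ := Nat.exists_eq_add_of_le hj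
  have e1 : 1 + k' - 1 = k' := by omega
  have e2 : 1 + k' + 1 + j' - 1 = j' + k' + 1 := by omega
  have e3 : 1 + k' + 1 + j' = j' + k' + 2 := by omega
  have e4 : j' + k' + 2 - (1 + k') + 1 = j' + 2 := by omega
  rw [e1, e2, e3, e4]
  have hA := hrec (j' + k' + 1)
  have hB := aux k' (j' + 2)
  have e5 : j' + 2 + k' = j' + k' + 2 := by ring
  rw [e5] at hB
  simp only [show j' + k' + 2 + 1 = j' + k' + 1 + 2 from by omega,
    show (1 : ℕ) + k' = k' + 1 from by omega,
    show j' + k' + 1 + 1 = j' + k' + 2 from by omega] at hA hB ⊢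
  linear_combination hB + a k' * hA
end

section
/- Let q(a,b) = a² + b² − ℓab with ℓ ≥ 3 an integer. If (a,b) is a pair of nonnegative integers with q(a,b) = 1 and 0 < a < b, then (b, ℓb − a) also satisfies q = 1, and (ℓa − b < a or ℓa − b < 0); consequently every nonnegative integer solution of q(a,b) = 1 with a ≤ b is of the form (a(k−1), a(k)) for some k ≥ 1, where a(0)=0, a(1)=1, a(k+1)=ℓa(k)−a(k−1). -/
private lemma kac_aux (ℓ : ℤ) (hℓ : 3 ≤ ℓ) (A : ℕ → ℤ)
    (hA0 : A 0 = 0) (hA1 : A 1 = 1)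
    (hArec : ∀ k : ℕ, A (k + 2) = ℓ * A (k + 1) - A k) :
    ∀ n : ℕ, ∀ a b : ℤ, b.toNat = n → 0 ≤ a → a ≤ b →
      a ^ 2 + b ^ 2 - ℓ * a * b = 1 →
      ∃ k : ℕ, 1 ≤ k ∧ a = A (k - 1) ∧ b = A k := by
  intro n
  induction n using Nat.strong_induction_on with
  | _ n ih =>
    intro a b hn ha hab h
    have hb0 : 0 ≤ b := le_trans ha hab
    rcases eq_or_lt_of_le ha with ha0 | hapos
    · -- a = 0
      subst ha0
      have hb1 : b = 1 := by
        have h1 : b ≤ 1 := by nlinarith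
        have h2 : 1 ≤ b := by nlinarith
        omega
      exact ⟨1, le_refl 1, by simp [hA0], by simp [hA1, hb1]⟩
    · rcases eq_or_lt_of_le hab with hab' | hab'
      · exfalso; subst hab'; nlinarith [mul_pos hapos hapos]
      · -- descent: (a', a) with a' = ℓa - b
        have hb : 0 < b := lt_trans hapos hab'
        have key : (ℓ * a - b) * b = a ^ 2 - 1 := by linear_combination -h
        have ha'0 : 0 ≤ ℓ * a - b := by
          by_contra hneg
          push_neg at hneg
          nlinarith
        have ha'a : ℓ * a - b < a := by nlinarith
        have hq' : (ℓ * a - b) ^ 2 + a ^ 2 - ℓ * (ℓ * a - b) * a = 1 := by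
          linear_combination h
        obtain ⟨k, hk1, hk2, hk3⟩ := ih a.toNat (by omega) (ℓ * a - b) a rfl ha'0
          (le_of_lt ha'a) hq'
        refine ⟨k + 1, by omega, by simpa using hk3, ?_⟩
        have : A (k + 1) = ℓ * A k - A (k - 1) := by
          have := hArec (k - 1)
          have hkk : k - 1 + 2 = k + 1 := by omega
          have hkk' : k - 1 + 1 = k := by omega
          rwa [hkk, hkk'] at this
        rw [this, ← hk3, ← hk2]; ring

/-- Core of Kac's classification for the ℓ-Kronecker quiver (ℓ ≥ 3): for
q(a,b) = a² + b² − ℓab, if q(a,b) = 1 with 0 < a < b then q(b, ℓb−a) = 1 and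
ℓa − b < a or ℓa − b < 0; consequently every nonnegative integer solution of
q(a,b) = 1 with a ≤ b is (A(k−1), A(k)) for some k ≥ 1, where A(0)=0, A(1)=1,
A(k+1)=ℓA(k)−A(k−1). -/
theorem stmt_19 (ℓ : ℤ) (hℓ : 3 ≤ ℓ) (A : ℕ → ℤ)
    (hA0 : A 0 = 0) (hA1 : A 1 = 1)
    (hArec : ∀ k : ℕ, A (k + 2) = ℓ * A (k + 1) - A k) :
    (∀ a b : ℤ, a ^ 2 + b ^ 2 - ℓ * a * b = 1 → 0 < a → a < b →
      (b ^ 2 + (ℓ * b - a) ^ 2 - ℓ * b * (ℓ * b - a) = 1 ∧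
        (ℓ * a - b < a ∨ ℓ * a - b < 0))) ∧
    (∀ a b : ℤ, 0 ≤ a → a ≤ b → a ^ 2 + b ^ 2 - ℓ * a * b = 1 →
      ∃ k : ℕ, 1 ≤ k ∧ a = A (k - 1) ∧ b = A k) := by
  constructor
  · intro a b h ha hab
    refine ⟨by linear_combination h, ?_⟩
    left
    have hb : 0 < b := lt_trans ha hab
    have key : (ℓ * a - b) * b = a ^ 2 - 1 := by linear_combination -h
    nlinarith
  · intro a b ha hab h
    exact kac_aux ℓ hℓ A hA0 hA1 hArec b.toNat a b rfl ha hab h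
end
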